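/- (Fact 3 of the paper: monotonicity holds unnested but fails nested.) For all α, β, γ ∈ Φ_XY, if α → β is valid then [β]γ → [α]γ is valid. Moreover, there exist α, β ∈ Φ_XY and φ ∈ Φ_ConSHN-BT such that α → β is valid and [β]φ → [α]φ is not valid; concretely, with α = ⊤ ∧ p, β = ⊤ and φ = ◇¬p, the formula (⊤ ∧ p) → ⊤ is valid but [⊤]◇¬p → [⊤ ∧ p]◇¬p is not valid. -/

import Mathlib

namespace ConSHN

/-- Formulas of the language Φ_XY, over atomic propositions indexed by ℕ. -/
inductive FXY : Type
  | atom : ℕ → FXY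
  | bot  : FXY
  | neg  : FXY → FXY
  | conj : FXY → FXY → FXY
  | X    : FXY → FXY
  | Y    : FXY → FXY
  deriving DecidableEq

/-- Formulas of the language Φ_ConSHN-BT. -/
inductive F : Type
  | atom : ℕ → F
  | bot  : F
  | neg  : F → F
  | conj : F → F → F
  | X    : F → F
  | Y    : F → F
  | con  : FXY → F → F
  deriving DecidableEq

namespace FXY

def top : FXY := neg bot
def imp (a b : FXY) : FXY := neg (conj a (neg b))
def or (a b : FXY) : FXY := neg (conj (neg a) (neg b))
def iff (a b : FXY) : FXY := conj (imp a b) (imp b a)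

/-- n-fold application of X. -/
def Xn : ℕ → FXY → FXY
  | 0, a => a
  | n+1, a => X (Xn n a)

/-- n-fold application of Y. -/
def Yn : ℕ → FXY → FXY
  | 0, a => a
  | n+1, a => Y (Yn n a)

/-- The embedding of Φ_XY into Φ_ConSHN-BT. -/
def toF : FXY → F
  | atom p => .atom p
  | bot => .bot
  | neg a => .neg (toF a)
  | conj a b => .conj (toF a) (toF b)
  | X a => .X (toF a)
  | Y a => .Y (toF a)

/-- Purely propositional formulas (no occurrence of X or Y). -/
inductive IsPL : FXY → Prop
  | atom (p : ℕ) : IsPL (atom p)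
  | bot : IsPL bot
  | neg {a} : IsPL a → IsPL (neg a)
  | conj {a b} : IsPL a → IsPL b → IsPL (conj a b)

/-- The language Φ_N-XY : β ::= Xⁿp | Xⁿ⊥ | Yⁿp | Yⁿ⊥ | ¬β | (β ∧ β). -/
inductive NXY : FXY → Prop
  | xatom (n p : ℕ) : NXY (Xn n (atom p))
  | xbot (n : ℕ) : NXY (Xn n bot)
  | yatom (n p : ℕ) : NXY (Yn n (atom p))
  | ybot (n : ℕ) : NXY (Yn n bot)
  | neg {a} : NXY a → NXY (neg a)
  | conj {a b} : NXY a → NXY b → NXY (conj a b)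

end FXY

namespace F

def top : F := neg bot
def imp (a b : F) : F := neg (conj a (neg b))
def or (a b : F) : F := neg (conj (neg a) (neg b))
def iff (a b : F) : F := conj (imp a b) (imp b a)

/-- ⟨α⟩φ := ¬[α]¬φ -/
def dcon (α : FXY) (φ : F) : F := neg (con α (neg φ))

/-- □φ := [⊤]φ -/
def box (φ : F) : F := con FXY.top φ

/-- ◇φ := ¬□¬φ -/
def dia (φ : F) : F := neg (box (neg φ))

/-- Closed formulas of Φ_ConSHN-BT : χ ::= [α]φ | ¬χ | (χ ∧ χ). -/
inductive Closed : F → Prop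
  | con (α : FXY) (φ : F) : Closed (con α φ)
  | neg {χ} : Closed χ → Closed (neg χ)
  | conj {χ₁ χ₂} : Closed χ₁ → Closed χ₂ → Closed (conj χ₁ χ₂)

/-- The language Φ_Con-XY : φ ::= Xⁿp | Xⁿ⊥ | Yⁿp | Yⁿ⊥ | ¬φ | (φ ∧ φ) | [β]φ, β ∈ Φ_N-XY. -/
inductive ConXY : F → Prop
  | xatom (n p : ℕ) : ConXY (FXY.Xn n (.atom p)).toF
  | xbot (n : ℕ) : ConXY (FXY.Xn n .bot).toF
  | yatom (n p : ℕ) : ConXY (FXY.Yn n (.atom p)).toF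
  | ybot (n : ℕ) : ConXY (FXY.Yn n .bot).toF
  | neg {φ} : ConXY φ → ConXY (neg φ)
  | conj {φ ψ} : ConXY φ → ConXY ψ → ConXY (conj φ ψ)
  | con {β : FXY} {φ} : β.NXY → ConXY φ → ConXY (con β φ)

/-- The language Φ_One□-XY : φ ::= β | ¬φ | (φ ∧ φ) | □β, β ∈ Φ_N-XY. -/
inductive OneBox : F → Prop
  | base {β : FXY} : β.NXY → OneBox β.toF
  | neg {φ} : OneBox φ → OneBox (neg φ)
  | conj {φ ψ} : OneBox φ → OneBox ψ → OneBox (conj φ ψ)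
  | box {β : FXY} : β.NXY → OneBox (box β.toF)

end F

/-- A branching-time model. -/
structure Model where
  W : Type
  lt : W → W → Prop
  V : ℕ → Set W
  nonempty : Nonempty W
  serial : ∀ w, ∃ v, lt w v
  root : W
  reach : ∀ w : W, ∃! l : List W,
    List.Chain' lt l ∧ l.head? = some root ∧ l.getLast? = some w

/-- The set TL(M) of timelines of the model M. -/
def Timeline (M : Model) : Set (ℕ → M.W) :=
  {π | π 0 = M.root ∧ ∀ i, M.lt (π i) (π (i + 1))}

/-- AT(C): the acceptable timelines by a context C (AT(∅) = TL(M)). -/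
def AT (M : Model) (C : Set (Set (ℕ → M.W))) : Set (ℕ → M.W) :=
  Timeline M ∩ ⋂₀ C

/-- Truth of Φ_XY formulas at (M, π, i) (independent of contexts). -/
def satXY (M : Model) (π : ℕ → M.W) : ℕ → FXY → Prop
  | i, .atom p => π i ∈ M.V p
  | _, .bot => False
  | i, .neg a => ¬ satXY M π i a
  | i, .conj a b => satXY M π i a ∧ satXY M π i b
  | i, .X a => satXY M π (i + 1) a
  | i, .Y a => 0 < i ∧ satXY M π (i - 1) a

/-- The indefeasible ontic rule ⟨⟨α⟩⟩_i generated by α at instant i. -/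
def ruleOf (M : Model) (α : FXY) (i : ℕ) : Set (ℕ → M.W) :=
  {π | π ∈ Timeline M ∧ satXY M π i α}

/-- The update C + α@i of a context C with α at instant i. -/
def upd (M : Model) (C : Set (Set (ℕ → M.W))) (α : FXY) (i : ℕ) :
    Set (Set (ℕ → M.W)) :=
  insert (ruleOf M α i) C

/-- Truth of Φ_ConSHN-BT formulas at (M, C, π, i). -/
def sat (M : Model) : Set (Set (ℕ → M.W)) → (ℕ → M.W) → ℕ → F → Prop
  | _, π, i, .atom p => π i ∈ M.V p
  | _, _, _, .bot => False
  | C, π, i, .neg φ => ¬ sat M C π i φ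
  | C, π, i, .conj φ ψ => sat M C π i φ ∧ sat M C π i ψ
  | C, π, i, .X φ => sat M C π (i + 1) φ
  | C, π, i, .Y φ => 0 < i ∧ sat M C π (i - 1) φ
  | C, π, i, .con α φ =>
      ∀ π' ∈ AT M (upd M C α i), sat M (upd M C α i) π' i φ

/-- C is a context for M: a finite set of sets of timelines. -/
def IsContext (M : Model) (C : Set (Set (ℕ → M.W))) : Prop :=
  C.Finite ∧ ∀ R ∈ C, R ⊆ Timeline M

/-- Validity: truth at every contextualized pointed model. -/
def Valid (φ : F) : Prop :=
  ∀ (M : Model) (C : Set (Set (ℕ → M.W))) (π : ℕ → M.W) (i : ℕ),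
    IsContext M C → π ∈ AT M C → sat M C π i φ

/-- Satisfiability: truth at some contextualized pointed model. -/
def Satisfiable (φ : F) : Prop :=
  ∃ (M : Model) (C : Set (Set (ℕ → M.W))) (π : ℕ → M.W) (i : ℕ),
    IsContext M C ∧ π ∈ AT M C ∧ sat M C π i φ

/-- Propositional evaluation: ⊥, ¬, ∧ are interpreted, all other formulas
are treated as propositional atoms evaluated by v. -/
def evalProp (v : F → Prop) : F → Prop
  | .bot => False
  | .neg φ => ¬ evalProp v φ
  | .conj φ ψ => evalProp v φ ∧ evalProp v ψ
  | φ => v φ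

/-- φ is a propositional tautology. -/
def Taut (φ : F) : Prop := ∀ v : F → Prop, evalProp v φ

end ConSHN

open ConSHN

/-!
Unnested, the consequent γ of `[β]γ` is a Φ_XY formula, whose truth at a timeline does not
depend on the context; since `α → β` is valid, every timeline admitted after updating with `α`
is also admitted after updating with `β`, so `[β]γ` gives `[α]γ`.

Nested, the update with `α` also restricts the timelines quantified over by an inner modality.
In the binary tree of boolean lists with `p` true exactly at nodes whose last step is `true`,
take the all-`true` timeline at instant 1: the all-`false` timeline witnesses `[⊤]◇¬p`, but
after the update with `⊤ ∧ p` every admitted timeline satisfies `p` at instant 1, so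
`[⊤ ∧ p]◇¬p` fails.
-/

theorem List.eq_of_isChain_flip_of_head?_eq {α : Type*} {r : α → α → Prop} {a : α}
    (hpred : ∀ u v w, r u w → r v w → u = v) (hroot : ∀ u, ¬ r u a) :
    ∀ {l l' : List α}, IsChain (flip r) l → IsChain (flip r) l' →
      l.getLast? = some a → l'.getLast? = some a → l.head? = l'.head? → l = l'
  | [], _, _, _, h, _, _ => by simp at h
  | _ :: _, [], _, _, _, h, _ => by simp at h
  | [w], [w'], _, _, _, _, h => by simpa using h
  | [w], u' :: v' :: l', _, hl', hw, _, h => by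
    obtain rfl : w = u' := by simpa using h
    obtain rfl : w = a := by simpa using hw
    exact absurd (isChain_cons_cons.1 hl').1 (hroot v')
  | u :: v :: l, [w'], hl, _, _, hw', h => by
    obtain rfl : u = w' := by simpa using h
    obtain rfl : u = a := by simpa using hw'
    exact absurd (isChain_cons_cons.1 hl).1 (hroot v)
  | u :: v :: l, u' :: v' :: l', hl, hl', hw, hw', h => by
    obtain rfl : u = u' := by simpa using h
    rw [isChain_cons_cons] at hl hl'
    obtain rfl : v = v' := hpred _ _ _ hl.1 hl'.1
    rw [eq_of_isChain_flip_of_head?_eq hpred hroot hl.2 hl'.2 (by simpa using hw)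
      (by simpa using hw') rfl]

theorem List.eq_of_isChain_of_getLast?_eq {α : Type*} {r : α → α → Prop} {a : α}
    (hpred : ∀ u v w, r u w → r v w → u = v) (hroot : ∀ u, ¬ r u a)
    {l l' : List α} (hl : IsChain r l) (hl' : IsChain r l')
    (ha : l.head? = some a) (ha' : l'.head? = some a) (h : l.getLast? = l'.getLast?) :
    l = l' := by
  rw [← reverse_inj]
  refine eq_of_isChain_flip_of_head?_eq hpred hroot ?_ ?_ ?_ ?_ ?_ <;>
    simpa [isChain_reverse, flip]

theorem List.isChain_tails {α : Type*} (l : List α) :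
    IsChain (fun u v => ∃ a, u = a :: v) l.tails := by
  induction l with
  | nil => simp
  | cons b l ih =>
    rw [tails_cons, isChain_cons]
    refine ⟨?_, ih⟩
    cases l <;> simp

theorem List.getLast?_tails {α : Type*} (l : List α) : l.tails.getLast? = some [] := by
  induction l with
  | nil => rfl
  | cons b l ih => simp [getLast?_cons, ih]

theorem List.head?_tails {α : Type*} (l : List α) : l.tails.head? = some l := by
  cases l <;> rfl

namespace ConSHN

section Semantics

variable {M : Model} {C : Set (Set (ℕ → M.W))} {π : ℕ → M.W} {i : ℕ}

theorem sat_toF (a : FXY) : sat M C π i a.toF ↔ satXY M π i a := by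
  induction a generalizing i with
  | atom p => rfl
  | bot => rfl
  | neg a ih => simp [FXY.toF, sat, satXY, ih]
  | conj a b iha ihb => simp [FXY.toF, sat, satXY, iha, ihb]
  | X a ih => simp [FXY.toF, sat, satXY, ih]
  | Y a ih => simp [FXY.toF, sat, satXY, ih]

theorem sat_imp (φ ψ : F) : sat M C π i (F.imp φ ψ) ↔ (sat M C π i φ → sat M C π i ψ) := by
  simp only [F.imp, sat]
  tauto

theorem satXY_top : satXY M π i FXY.top := by
  simp [FXY.top, satXY]

theorem isContext_empty : IsContext M ∅ :=
  ⟨Set.finite_empty, by simp⟩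

theorem AT_empty : AT M ∅ = Timeline M := by
  simp [AT]

theorem AT_upd (α : FXY) : AT M (upd M C α i) = AT M C ∩ {π | satXY M π i α} := by
  ext π
  simp only [AT, upd, ruleOf, Set.sInter_insert, Set.mem_inter_iff, Set.mem_ofPred_eq]
  tauto

theorem AT_upd_top : AT M (upd M C FXY.top i) = AT M C := by
  simp [AT_upd, satXY_top]

theorem sat_dia_neg_atom (p : ℕ) :
    sat M C π i (F.dia (F.neg (F.atom p))) ↔ ∃ π' ∈ AT M C, π' i ∉ M.V p := by
  simp [F.dia, F.box, sat, AT_upd_top]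

theorem sat_con_dia_neg_atom (α : FXY) (p : ℕ) :
    sat M C π i (F.con α (F.dia (F.neg (F.atom p)))) ↔
      ∀ π' ∈ AT M (upd M C α i), ∃ π'' ∈ AT M (upd M C α i), π'' i ∉ M.V p :=
  forall₂_congr fun _ _ => sat_dia_neg_atom p

theorem satXY_of_valid_imp {α β : FXY} (h : Valid (F.imp α.toF β.toF))
    (hπ : π ∈ Timeline M) (hα : satXY M π i α) : satXY M π i β := by
  have hαβ := h M ∅ π i isContext_empty (AT_empty ▸ hπ)
  rw [sat_imp, sat_toF, sat_toF] at hαβ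
  exact hαβ hα

end Semantics

theorem valid_imp_con_toF_of_valid_imp {α β : FXY} (γ : FXY)
    (h : Valid (F.imp α.toF β.toF)) : Valid (F.imp (F.con β γ.toF) (F.con α γ.toF)) := by
  intro M C π i _ _
  rw [sat_imp]
  intro hβ π' hπ'
  rw [AT_upd] at hπ'
  have hπ'β : π' ∈ AT M (upd M C β i) := by
    rw [AT_upd]
    exact ⟨hπ'.1, satXY_of_valid_imp h hπ'.1.1 hπ'.2⟩
  exact (sat_toF γ).2 ((sat_toF γ).1 (hβ π' hπ'β))

theorem valid_imp_top (α : FXY) : Valid (F.imp α.toF FXY.top.toF) := by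
  intro M C π i _ _
  rw [sat_imp, sat_toF FXY.top]
  exact fun _ => satXY_top

/-- Nodes are the paths from the root, most recent step first. -/
def boolTree : Model where
  W := List Bool
  lt u v := ∃ b, v = b :: u
  V _ := {w | w.head? = some true}
  nonempty := ⟨[]⟩
  serial w := ⟨true :: w, true, rfl⟩
  root := []
  reach w := by
    refine ⟨w.tails.reverse, ⟨?_, ?_, ?_⟩, fun l ⟨hl, hroot, hw⟩ => ?_⟩
    · exact List.isChain_reverse.2 (List.isChain_tails w)
    · simpa using List.getLast?_tails w
    · simpa using List.head?_tails w
    · refine List.eq_of_isChain_of_getLast?_eq (a := []) ?_ ?_ hl ?_ hroot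
        (by simpa using List.getLast?_tails w) (by simpa [hw] using (List.head?_tails w).symm)
      · rintro u v w ⟨a, rfl⟩ ⟨b, h⟩
        exact (List.cons_eq_cons.1 h).2
      · rintro u ⟨b, h⟩
        exact List.cons_ne_nil _ _ h.symm
      · exact List.isChain_reverse.2 (List.isChain_tails w)

def constTimeline (b : Bool) : ℕ → boolTree.W := fun k => List.replicate k b

theorem constTimeline_mem_timeline (b : Bool) : constTimeline b ∈ Timeline boolTree :=
  ⟨rfl, fun _ => ⟨b, List.replicate_succ⟩⟩

theorem constTimeline_mem_V (b : Bool) (p i : ℕ) :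
    constTimeline b (i + 1) ∈ boolTree.V p ↔ b = true := by
  show (List.replicate (i + 1) b).head? = some true ↔ b = true
  simp [List.replicate_succ]

theorem not_valid_imp_con_dia_neg_atom (p : ℕ) :
    ¬ Valid (F.imp (F.con FXY.top (F.dia (F.neg (F.atom p))))
      (F.con (FXY.conj FXY.top (.atom p)) (F.dia (F.neg (F.atom p))))) := by
  intro h
  have hmono := (sat_imp _ _).1 <| h boolTree ∅ (constTimeline true) 1 isContext_empty
    (AT_empty ▸ constTimeline_mem_timeline true)
  rw [sat_con_dia_neg_atom, sat_con_dia_neg_atom, AT_upd_top, AT_upd, AT_empty] at hmono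
  obtain ⟨π, ⟨-, -, hπ⟩, hπp⟩ := hmono
    (fun _ _ => ⟨constTimeline false, constTimeline_mem_timeline false, by
      simp [constTimeline_mem_V]⟩)
    (constTimeline true) ⟨constTimeline_mem_timeline true, satXY_top, by
      simp [satXY, constTimeline_mem_V]⟩
  exact hπp hπ

end ConSHN

/-- Fact 3: monotonicity holds for unnested conditional strong historical
necessity but fails for nested occurrences: concretely, (⊤ ∧ p) → ⊤ is valid
while [⊤]◇¬p → [⊤ ∧ p]◇¬p is not. -/
theorem fact_monotonicity_unnested_but_not_nested :
    (∀ α β γ : FXY,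
      Valid (F.imp α.toF β.toF) →
      Valid (F.imp (F.con β γ.toF) (F.con α γ.toF))) ∧
    (∀ p : ℕ,
      Valid (F.imp (FXY.conj FXY.top (.atom p)).toF FXY.top.toF) ∧
      ¬ Valid (F.imp (F.con FXY.top (F.dia (F.neg (F.atom p))))
        (F.con (FXY.conj FXY.top (.atom p)) (F.dia (F.neg (F.atom p)))))) :=
  ⟨fun _ _ γ h => valid_imp_con_toF_of_valid_imp γ h,
    fun p => ⟨valid_imp_top _, not_valid_imp_con_dia_neg_atom p⟩⟩
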